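/- Let G be a finite simple graph on n vertices. The number of isomorphism classes of graphs Seidel complement equivalent to G is at most n + 1; more precisely, every graph Seidel complement equivalent to G is isomorphic to G or to G*v for some vertex v of G. -/

import Mathlib

/-!
Complementing twice at the same vertex gives back the graph, and for `u ≠ w` the graph
`G*u*w` is isomorphic to `G*w` via the transposition of `u` and `w`. As Seidel complementation
commutes with graph isomorphisms, induction on the length of the sequence shows that
`G*v₁*⋯*v_k` is always isomorphic to `G` or to a single `G*v`.
-/

universe u

/-- The Seidel complement of `G` at `v`: adjacency between the open neighborhood of `v`
and the set of vertices different from `v` and not adjacent to `v` is complemented,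
all other adjacencies are unchanged. -/
def seidelCompl {V : Type u} (G : SimpleGraph V) (v : V) : SimpleGraph V where
  Adj x y := x ≠ y ∧
    Xor' (G.Adj x y)
      ((G.Adj v x ∧ ¬ G.Adj v y ∧ y ≠ v) ∨ (G.Adj v y ∧ ¬ G.Adj v x ∧ x ≠ v))
  symm := ⟨by
    rintro x y ⟨hxy, h⟩
    refine ⟨hxy.symm, ?_⟩
    have h1 : G.Adj x y ↔ G.Adj y x := G.adj_comm x y
    unfold Xor' Xor at h ⊢
    tauto⟩
  loopless := ⟨fun x h => h.1 rfl⟩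

/-- `G` and `H` are Seidel complement equivalent: some finite sequence of Seidel
complementations applied to `G` yields a graph isomorphic to `H`. -/
def SeidelEquiv {V W : Type u} (G : SimpleGraph V) (H : SimpleGraph W) : Prop :=
  ∃ l : List V, Nonempty ((l.foldl seidelCompl G) ≃g H)

@[simp]
lemma seidelCompl_adj {V : Type u} (G : SimpleGraph V) (v x y : V) :
    (seidelCompl G v).Adj x y ↔ x ≠ y ∧
      Xor (G.Adj x y)
        ((G.Adj v x ∧ ¬ G.Adj v y ∧ y ≠ v) ∨ (G.Adj v y ∧ ¬ G.Adj v x ∧ x ≠ v)) :=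
  Iff.rfl

section

variable {V : Type u} (G : SimpleGraph V)

@[simp]
lemma seidelCompl_seidelCompl_self (v : V) : seidelCompl (seidelCompl G v) v = G := by
  ext x y
  have := G.loopless.irrefl v
  have := G.ne_of_adj (a := x) (b := y)
  simp only [seidelCompl_adj, Xor]
  grind

lemma seidelCompl_seidelCompl_adj_swap [DecidableEq V] {u w : V} (huw : u ≠ w) (x y : V) :
    (seidelCompl (seidelCompl G u) w).Adj x y ↔
      (seidelCompl G w).Adj (Equiv.swap u w x) (Equiv.swap u w y) := by
  have := G.loopless.irrefl u
  have := G.loopless.irrefl w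
  have := G.adj_comm
  simp only [seidelCompl_adj, Equiv.swap_apply_def, Xor]
  split_ifs <;> subst_vars <;> grind

noncomputable def seidelComplSeidelComplIso {u w : V} (huw : u ≠ w) :
    seidelCompl (seidelCompl G u) w ≃g seidelCompl G w :=
  open Classical in
  { toEquiv := Equiv.swap u w
    map_rel_iff' := (seidelCompl_seidelCompl_adj_swap G huw _ _).symm }

end

def SimpleGraph.Iso.seidelCompl {V W : Type u} {G : SimpleGraph V} {H : SimpleGraph W}
    (e : G ≃g H) (v : V) : _root_.seidelCompl G v ≃g _root_.seidelCompl H (e v) where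
  toEquiv := e.toEquiv
  map_rel_iff' := by simp [e.map_adj_iff]

lemma nonempty_foldl_seidelCompl_iso {V : Type u} (G : SimpleGraph V) (l : List V) :
    Nonempty (l.foldl seidelCompl G ≃g G) ∨
      ∃ v : V, Nonempty (l.foldl seidelCompl G ≃g seidelCompl G v) := by
  induction l using List.reverseRecOn with
  | nil => exact Or.inl ⟨.refl⟩
  | append_singleton l w ih =>
    rw [List.foldl_append, List.foldl_cons, List.foldl_nil]
    obtain ⟨⟨e⟩⟩ | ⟨v, ⟨e⟩⟩ := ih
    · exact Or.inr ⟨e w, ⟨e.seidelCompl w⟩⟩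
    · by_cases h : e w = v
      · refine Or.inl ⟨(e.seidelCompl w).trans ?_⟩
        rw [h, seidelCompl_seidelCompl_self]
      · exact Or.inr ⟨e w,
          ⟨(e.seidelCompl w).trans (seidelComplSeidelComplIso G (Ne.symm h))⟩⟩

lemma SeidelEquiv.nonempty_iso {V W : Type u} {G : SimpleGraph V} {H : SimpleGraph W}
    (h : SeidelEquiv G H) :
    Nonempty (H ≃g G) ∨ ∃ v : V, Nonempty (H ≃g seidelCompl G v) := by
  obtain ⟨l, ⟨e⟩⟩ := h
  obtain ⟨⟨f⟩⟩ | ⟨v, ⟨f⟩⟩ := nonempty_foldl_seidelCompl_iso G l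
  · exact Or.inl ⟨e.symm.trans f⟩
  · exact Or.inr ⟨v, ⟨e.symm.trans f⟩⟩

/-- Every graph Seidel complement equivalent to `G` is isomorphic to `G` or to some `G*v`;
consequently there are at most `n + 1` isomorphism classes of graphs Seidel complement
equivalent to `G`. -/
theorem seidelEquiv_classes_card_le {V : Type u} [Fintype V] (G : SimpleGraph V) :
    (∀ (W : Type u) [Fintype W] (H : SimpleGraph W), SeidelEquiv G H →
      Nonempty (H ≃g G) ∨ ∃ v : V, Nonempty (H ≃g seidelCompl G v)) ∧
    ∃ S : Finset (SimpleGraph V), S.card ≤ Fintype.card V + 1 ∧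
      ∀ H : SimpleGraph V, SeidelEquiv G H → ∃ H' ∈ S, Nonempty (H ≃g H') := by
  classical
  refine ⟨fun W _ H hH ↦ hH.nonempty_iso,
    insert G (Finset.univ.image (seidelCompl G)), ?_, ?_⟩
  · calc (insert G (Finset.univ.image (seidelCompl G))).card
        ≤ (Finset.univ.image (seidelCompl G)).card + 1 := Finset.card_insert_le _ _
      _ ≤ Fintype.card V + 1 := by grw [Finset.card_image_le, Finset.card_univ]
  · intro H hH
    obtain ⟨⟨e⟩⟩ | ⟨v, ⟨e⟩⟩ := hH.nonempty_iso
    · exact ⟨G, by simp, ⟨e⟩⟩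
    · exact ⟨seidelCompl G v, by simp, ⟨e⟩⟩
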